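/- Let D_1 < … < D_r be depths and let r' ≤ r. Then for every d ≤ D_{r'} and all n⁻, n⁰, n⁺ ∈ ℕ^p, the pseudo-recursive truncated function with more levels gives a tighter upper bound: k^{(D_1,…,D_r)}_{d,1}(n⁻, n⁰, n⁺) ≤ k^{(D_1,…,D_{r'})}_{d,1}(n⁻, n⁰, n⁺). -/
import Mathlib


/-- Total weight `W(v) = Σ_{i : v_i ≠ 0} w_i` of the axes with at least one available split. -/
noncomputable def bartW (p : ℕ) (w : Fin p → ℝ) (v : Fin p → ℕ) : ℝ :=
  ∑ i ∈ Finset.univ.filter (fun i => v i ≠ 0), w i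


/-- Auxiliary pseudo-recursive truncated sub-correlation function `k̃_{d,γ}(current; original)`,
where `R = {D_1, …, D_{r-1}}` is the set of intermediate reset depths and `Dr = D_r` the final
truncation depth; `(bm, b0, bp)` are the original (full-grid) split counts. -/
noncomputable def bartKPRAux (p : ℕ) (w : Fin p → ℝ) (P : ℕ → ℝ)
    (R : Finset ℕ) (Dr : ℕ) (γ : ℝ) (bm b0 bp : Fin p → ℕ)
    (d : ℕ) (nm n0 np : Fin p → ℕ) : ℝ :=
  if ∀ i, nm i + n0 i + np i = 0 then 1
  else if Dr ≤ d then
    (if ∀ i, n0 i = 0 then 1 else 1 - (1 - γ) * P Dr)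
  else
    1 - P d * (1 - (1 / bartW p w (fun i => nm i + n0 i + np i)) *
      ∑ i ∈ Finset.univ.filter (fun i => nm i + n0 i + np i ≠ 0),
        (w i / ((nm i + n0 i + np i : ℕ) : ℝ)) *
          ((∑ k ∈ Finset.range (nm i),
              (if d + 1 ∈ R then bartKPRAux p w P R Dr γ bm b0 bp (d+1) bm b0 bp
               else bartKPRAux p w P R Dr γ bm b0 bp (d+1) (Function.update nm i k) n0 np)) +
           (∑ k ∈ Finset.range (np i),
              (if d + 1 ∈ R then bartKPRAux p w P R Dr γ bm b0 bp (d+1) bm b0 bp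
               else bartKPRAux p w P R Dr γ bm b0 bp (d+1) nm n0 (Function.update np i k)))))
termination_by Dr - d
decreasing_by all_goals omega

/-- The pseudo-recursive truncated sub-correlation function `k^{(D_1,…,D_{r+1})}_{d,γ}`,
where the strictly increasing depths are `Ds 0 < Ds 1 < … < Ds r` (so there are `r+1` of
them, the intermediate reset depths being `Ds 0, …, Ds (r-1)`). -/
noncomputable def bartKPR (p : ℕ) (w : Fin p → ℝ) (P : ℕ → ℝ)
    (r : ℕ) (Ds : Fin (r+1) → ℕ) (γ : ℝ)
    (d : ℕ) (nm n0 np : Fin p → ℕ) : ℝ :=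
  bartKPRAux p w P (Finset.image (fun j : Fin r => Ds j.castSucc) Finset.univ)
    (Ds (Fin.last r)) γ nm n0 np d nm n0 np

/-- With `γ = 1`, the truncated value is always `1` once the truncation depth is reached. -/
lemma bartKPRAux_trunc (p : ℕ) (w : Fin p → ℝ) (P : ℕ → ℝ)
    (R : Finset ℕ) (Dr : ℕ) (bm b0 bp : Fin p → ℕ)
    (d : ℕ) (nm n0 np : Fin p → ℕ) (hd : Dr ≤ d) :
    bartKPRAux p w P R Dr 1 bm b0 bp d nm n0 np = 1 := by
  rw [bartKPRAux]
  split_ifs <;> first | rfl | ring | omega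

/-- With `γ = 1` and `P ∈ [0,1]`, the auxiliary function takes values in `[0,1]`. -/
lemma bartKPRAux_mem (p : ℕ) (w : Fin p → ℝ) (hw : ∀ i, 0 < w i)
    (P : ℕ → ℝ) (hP : ∀ d, P d ∈ Set.Icc (0 : ℝ) 1)
    (R : Finset ℕ) (Dr : ℕ) (bm b0 bp : Fin p → ℕ) :
    ∀ n d, Dr - d ≤ n → ∀ nm n0 np : Fin p → ℕ,
      bartKPRAux p w P R Dr 1 bm b0 bp d nm n0 np ∈ Set.Icc (0 : ℝ) 1 := by
  intro n
  induction n with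
  | zero =>
    intro d hd nm n0 np
    rw [bartKPRAux_trunc p w P R Dr bm b0 bp d nm n0 np (by omega)]
    norm_num
  | succ n ih =>
    intro d hd nm n0 np
    by_cases hz : ∀ i, nm i + n0 i + np i = 0
    · rw [bartKPRAux]; rw [if_pos hz]; norm_num
    by_cases htr : Dr ≤ d
    · rw [bartKPRAux_trunc p w P R Dr bm b0 bp d nm n0 np htr]; norm_num
    rw [bartKPRAux, if_neg hz, if_neg htr]
    set F := Finset.univ.filter (fun i => nm i + n0 i + np i ≠ 0) with hF
    set W := bartW p w (fun i => nm i + n0 i + np i) with hWdef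
    have hFne : F.Nonempty := by
      push_neg at hz
      obtain ⟨i, hi⟩ := hz
      exact ⟨i, Finset.mem_filter.mpr ⟨Finset.mem_univ i, hi⟩⟩
    have hW : 0 < W := by
      rw [hWdef, bartW]; exact Finset.sum_pos (fun i _ => hw i) hFne
    set S := ∑ i ∈ F,
        (w i / ((nm i + n0 i + np i : ℕ) : ℝ)) *
          ((∑ k ∈ Finset.range (nm i),
              (if d + 1 ∈ R then bartKPRAux p w P R Dr 1 bm b0 bp (d+1) bm b0 bp
               else bartKPRAux p w P R Dr 1 bm b0 bp (d+1) (Function.update nm i k) n0 np)) +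
           (∑ k ∈ Finset.range (np i),
              (if d + 1 ∈ R then bartKPRAux p w P R Dr 1 bm b0 bp (d+1) bm b0 bp
               else bartKPRAux p w P R Dr 1 bm b0 bp (d+1) nm n0 (Function.update np i k)))) with hS
    have hmem : ∀ (cm c0 cp : Fin p → ℕ),
        bartKPRAux p w P R Dr 1 bm b0 bp (d+1) cm c0 cp ∈ Set.Icc (0:ℝ) 1 :=
      fun cm c0 cp => ih (d+1) (by omega) cm c0 cp
    have hS0 : 0 ≤ S := by
      apply Finset.sum_nonneg
      intro i hi
      apply mul_nonneg (div_nonneg (hw i).le (Nat.cast_nonneg _))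
      apply add_nonneg <;>
        exact Finset.sum_nonneg (fun k _ => by split_ifs <;> exact (hmem _ _ _).1)
    have hSW : S ≤ W := by
      apply Finset.sum_le_sum
      intro i hi
      have hni : nm i + n0 i + np i ≠ 0 := by
        simpa [hF] using (Finset.mem_filter.mp hi).2
      have hnR : (0:ℝ) < ((nm i + n0 i + np i : ℕ) : ℝ) := by exact_mod_cast Nat.pos_of_ne_zero hni
      have h1 : (∑ k ∈ Finset.range (nm i),
          (if d + 1 ∈ R then bartKPRAux p w P R Dr 1 bm b0 bp (d+1) bm b0 bp
           else bartKPRAux p w P R Dr 1 bm b0 bp (d+1) (Function.update nm i k) n0 np))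
          ≤ (nm i : ℝ) := by
        calc _ ≤ ∑ _k ∈ Finset.range (nm i), (1:ℝ) :=
              Finset.sum_le_sum (fun k _ => by split_ifs <;> exact (hmem _ _ _).2)
          _ = (nm i : ℝ) := by simp
      have h2 : (∑ k ∈ Finset.range (np i),
          (if d + 1 ∈ R then bartKPRAux p w P R Dr 1 bm b0 bp (d+1) bm b0 bp
           else bartKPRAux p w P R Dr 1 bm b0 bp (d+1) nm n0 (Function.update np i k)))
          ≤ (np i : ℝ) := by
        calc _ ≤ ∑ _k ∈ Finset.range (np i), (1:ℝ) :=
              Finset.sum_le_sum (fun k _ => by split_ifs <;> exact (hmem _ _ _).2)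
          _ = (np i : ℝ) := by simp
      calc (w i / ((nm i + n0 i + np i : ℕ) : ℝ)) * _
          ≤ (w i / ((nm i + n0 i + np i : ℕ) : ℝ)) * ((nm i + n0 i + np i : ℕ) : ℝ) := by
            apply mul_le_mul_of_nonneg_left _ (div_nonneg (hw i).le (Nat.cast_nonneg _))
            have : ((nm i : ℝ) + (np i : ℝ)) ≤ ((nm i + n0 i + np i : ℕ) : ℝ) := by
              push_cast; linarith [Nat.cast_nonneg (α := ℝ) (n0 i)]
            linarith [add_le_add h1 h2]
        _ = w i := div_mul_cancel₀ _ (ne_of_gt hnR)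
    have hx0 : (0:ℝ) ≤ (1 / W) * S := mul_nonneg (by positivity) hS0
    have hx1 : (1 / W) * S ≤ 1 := by
      rw [one_div_mul_eq_div]; exact (div_le_one hW).mpr hSW
    have hPd := hP d
    constructor
    · nlinarith [hPd.1, hPd.2]
    · nlinarith [hPd.1, hPd.2]

/-- Key monotonicity: if `R' ⊆ R`, every element of `R` below `Dr'` is in `R'`, and
`Dr' ≤ Dr`, then the auxiliary function with data `(R, Dr)` is below the one with `(R', Dr')`. -/
lemma bartKPRAux_mono (p : ℕ) (w : Fin p → ℝ) (hw : ∀ i, 0 < w i)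
    (P : ℕ → ℝ) (hP : ∀ d, P d ∈ Set.Icc (0 : ℝ) 1)
    (R R' : Finset ℕ) (Dr Dr' : ℕ)
    (hsub : R' ⊆ R) (hlt : ∀ x ∈ R, x < Dr' → x ∈ R') (hDD : Dr' ≤ Dr)
    (bm b0 bp : Fin p → ℕ) :
    ∀ n d, Dr' - d ≤ n → ∀ nm n0 np : Fin p → ℕ,
      bartKPRAux p w P R Dr 1 bm b0 bp d nm n0 np ≤
        bartKPRAux p w P R' Dr' 1 bm b0 bp d nm n0 np := by
  intro n
  induction n with
  | zero =>
    intro d hd nm n0 np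
    rw [bartKPRAux_trunc p w P R' Dr' bm b0 bp d nm n0 np (by omega)]
    exact (bartKPRAux_mem p w hw P hP R Dr bm b0 bp Dr d (by omega) nm n0 np).2
  | succ n ih =>
    intro d hd nm n0 np
    by_cases htr : Dr' ≤ d
    · rw [bartKPRAux_trunc p w P R' Dr' bm b0 bp d nm n0 np htr]
      exact (bartKPRAux_mem p w hw P hP R Dr bm b0 bp Dr d (by omega) nm n0 np).2
    by_cases hz : ∀ i, nm i + n0 i + np i = 0
    · conv_lhs => rw [bartKPRAux]
      conv_rhs => rw [bartKPRAux]
      rw [if_pos hz, if_pos hz]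
    have htrR : ¬ Dr ≤ d := by omega
    conv_lhs => rw [bartKPRAux]
    conv_rhs => rw [bartKPRAux]
    rw [if_neg hz, if_neg hz, if_neg htr, if_neg htrR]
    have hkey : ∀ cm c0 cp : Fin p → ℕ,
        (if d + 1 ∈ R then bartKPRAux p w P R Dr 1 bm b0 bp (d+1) bm b0 bp
         else bartKPRAux p w P R Dr 1 bm b0 bp (d+1) cm c0 cp) ≤
        (if d + 1 ∈ R' then bartKPRAux p w P R' Dr' 1 bm b0 bp (d+1) bm b0 bp
         else bartKPRAux p w P R' Dr' 1 bm b0 bp (d+1) cm c0 cp) := by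
      intro cm c0 cp
      by_cases hR' : d + 1 ∈ R'
      · rw [if_pos hR', if_pos (hsub hR')]
        exact ih (d+1) (by omega) bm b0 bp
      · rw [if_neg hR']
        by_cases hR : d + 1 ∈ R
        · have hD : Dr' ≤ d + 1 := by
            by_contra h
            exact hR' (hlt _ hR (by omega))
          rw [if_pos hR, bartKPRAux_trunc p w P R' Dr' bm b0 bp (d+1) cm c0 cp hD]
          exact (bartKPRAux_mem p w hw P hP R Dr bm b0 bp Dr (d+1) (by omega) bm b0 bp).2
        · rw [if_neg hR]
          exact ih (d+1) (by omega) cm c0 cp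
    have hFne : (Finset.univ.filter (fun i => nm i + n0 i + np i ≠ 0)).Nonempty := by
      push_neg at hz
      obtain ⟨i, hi⟩ := hz
      exact ⟨i, Finset.mem_filter.mpr ⟨Finset.mem_univ i, hi⟩⟩
    have hW : 0 < bartW p w (fun i => nm i + n0 i + np i) := by
      rw [bartW]; exact Finset.sum_pos (fun i _ => hw i) hFne
    have hSle : (∑ i ∈ Finset.univ.filter (fun i => nm i + n0 i + np i ≠ 0),
        (w i / ((nm i + n0 i + np i : ℕ) : ℝ)) *
          ((∑ k ∈ Finset.range (nm i),
              (if d + 1 ∈ R then bartKPRAux p w P R Dr 1 bm b0 bp (d+1) bm b0 bp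
               else bartKPRAux p w P R Dr 1 bm b0 bp (d+1) (Function.update nm i k) n0 np)) +
           (∑ k ∈ Finset.range (np i),
              (if d + 1 ∈ R then bartKPRAux p w P R Dr 1 bm b0 bp (d+1) bm b0 bp
               else bartKPRAux p w P R Dr 1 bm b0 bp (d+1) nm n0 (Function.update np i k)))))
        ≤ (∑ i ∈ Finset.univ.filter (fun i => nm i + n0 i + np i ≠ 0),
        (w i / ((nm i + n0 i + np i : ℕ) : ℝ)) *
          ((∑ k ∈ Finset.range (nm i),
              (if d + 1 ∈ R' then bartKPRAux p w P R' Dr' 1 bm b0 bp (d+1) bm b0 bp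
               else bartKPRAux p w P R' Dr' 1 bm b0 bp (d+1) (Function.update nm i k) n0 np)) +
           (∑ k ∈ Finset.range (np i),
              (if d + 1 ∈ R' then bartKPRAux p w P R' Dr' 1 bm b0 bp (d+1) bm b0 bp
               else bartKPRAux p w P R' Dr' 1 bm b0 bp (d+1) nm n0 (Function.update np i k))))) := by
      apply Finset.sum_le_sum
      intro i _
      apply mul_le_mul_of_nonneg_left _ (div_nonneg (hw i).le (Nat.cast_nonneg _))
      exact add_le_add
        (Finset.sum_le_sum (fun k _ => hkey (Function.update nm i k) n0 np))
        (Finset.sum_le_sum (fun k _ => hkey nm n0 (Function.update np i k)))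
    have hPd := hP d
    have h1W : (0:ℝ) ≤ 1 / bartW p w (fun i => nm i + n0 i + np i) := by positivity
    nlinarith [mul_le_mul_of_nonneg_left hSle h1W,
      mul_le_mul_of_nonneg_left (mul_le_mul_of_nonneg_left hSle h1W) hPd.1]

/-- Theorem 12: using more pseudo-recursion levels gives a tighter upper bound. For strictly
increasing depths `D_1 < … < D_{r+1}` and `r' ≤ r`, truncating the sequence of depths to its
first `r' + 1` entries can only increase the value: for every `d ≤ D_{r'+1}`,
`k^{(D_1,…,D_{r+1})}_{d,1} ≤ k^{(D_1,…,D_{r'+1})}_{d,1}`. -/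
theorem bartKPR_more_levels_tighter
    (p : ℕ) (hp : 1 ≤ p) (w : Fin p → ℝ) (hw : ∀ i, 0 < w i)
    (P : ℕ → ℝ) (hP : ∀ d, P d ∈ Set.Icc (0 : ℝ) 1)
    (r r' : ℕ) (hr : r' ≤ r) (Ds : Fin (r + 1) → ℕ) (hDs : StrictMono Ds)
    (d : ℕ) (hd : d ≤ Ds (Fin.castLE (Nat.succ_le_succ hr) (Fin.last r')))
    (nm n0 np : Fin p → ℕ) :
    bartKPR p w P r Ds 1 d nm n0 np ≤
      bartKPR p w P r' (fun j => Ds (Fin.castLE (Nat.succ_le_succ hr) j)) 1 d nm n0 np := by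
  unfold bartKPR
  have hsub : (Finset.image (fun j : Fin r' =>
        Ds (Fin.castLE (Nat.succ_le_succ hr) j.castSucc)) Finset.univ) ⊆
      (Finset.image (fun j : Fin r => Ds j.castSucc) Finset.univ) := by
    intro x hx
    simp only [Finset.mem_image, Finset.mem_univ, true_and] at hx ⊢
    obtain ⟨j, hj⟩ := hx
    refine ⟨⟨j.1, lt_of_lt_of_le j.2 hr⟩, ?_⟩
    rw [← hj]
    congr 1
  have hlt : ∀ x ∈ (Finset.image (fun j : Fin r => Ds j.castSucc) Finset.univ),
      x < Ds (Fin.castLE (Nat.succ_le_succ hr) (Fin.last r')) →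
      x ∈ (Finset.image (fun j : Fin r' =>
        Ds (Fin.castLE (Nat.succ_le_succ hr) j.castSucc)) Finset.univ) := by
    intro x hx hxlt
    simp only [Finset.mem_image, Finset.mem_univ, true_and] at hx ⊢
    obtain ⟨j, hj⟩ := hx
    have hjr' : j.1 < r' := by
      have := hDs.lt_iff_lt.mp (hj ▸ hxlt)
      simpa [Fin.lt_def] using this
    refine ⟨⟨j.1, hjr'⟩, ?_⟩
    rw [← hj]
    congr 1
  have hDD : Ds (Fin.castLE (Nat.succ_le_succ hr) (Fin.last r')) ≤ Ds (Fin.last r) :=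
    hDs.monotone (by simpa [Fin.le_def] using hr)
  exact bartKPRAux_mono p w hw P hP _ _ _ _ hsub hlt hDD nm n0 np _ d le_rfl nm n0 np
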